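/- Let m and n be positive integers with gcd(m,n) = 1. Then every cycle in the m × n grid graph is uniquely determined by its signature; equivalently, if two cycles in the m × n grid have the same signature, they are equal. -/

import Mathlib

namespace Slitherlink

/-- Vertices of grids: integer points of the plane. -/
abbrev V : Type := ℤ × ℤ

/-- Edges: unordered pairs of vertices. -/
abbrev Edge : Type := Sym2 V

/-- `p` is a vertex of the `m × n` grid. -/
def gridVertex (m n : ℤ) (p : V) : Prop :=
  1 ≤ p.1 ∧ p.1 ≤ m ∧ 1 ≤ p.2 ∧ p.2 ≤ n

/-- `e` is an edge of the `m × n` grid: a unit segment between grid vertices. -/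
def gridEdge (m n : ℤ) (e : Edge) : Prop :=
  ∃ p q : V, e = s(p, q) ∧ gridVertex m n p ∧ gridVertex m n q ∧
    ((q.1 = p.1 + 1 ∧ q.2 = p.2) ∨ (q.1 = p.1 ∧ q.2 = p.2 + 1))

/-- The four boundary edges of the unit cell with lower-left corner `(a, b)`. -/
def cellEdges (a b : ℤ) : Set Edge :=
  {s((a, b), (a + 1, b)), s((a, b), (a, b + 1)),
   s((a + 1, b), (a + 1, b + 1)), s((a, b + 1), (a + 1, b + 1))}

/-- `(a, b)` is the lower-left corner of a cell of the `m × n` grid. -/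
def isCell (m n a b : ℤ) : Prop := 1 ≤ a ∧ a + 1 ≤ m ∧ 1 ≤ b ∧ b + 1 ≤ n

/-- Number of edges of `E` incident with the vertex `p`. -/
noncomputable def degree (E : Set Edge) (p : V) : ℕ := {e ∈ E | p ∈ e}.ncard

/-- Number of edges of `E` among the four boundary edges of the cell at `(a, b)`. -/
noncomputable def cellCount (E : Set Edge) (a b : ℤ) : ℕ := (E ∩ cellEdges a b).ncard

/-- A set of edges of the `m × n` grid is totally even if every vertex is incident with an
even number of its edges and every cell contains an even number of its edges. -/
def TotallyEven (m n : ℤ) (E : Set Edge) : Prop :=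
  (∀ e ∈ E, gridEdge m n e) ∧
  (∀ p : V, Even (degree E p)) ∧
  (∀ a b : ℤ, isCell m n a b → Even (cellCount E a b))

/-- The graph on `V` whose edges are the members of `C`. -/
def cycleGraph (C : Set Edge) : SimpleGraph V where
  Adj p q := p ≠ q ∧ s(p, q) ∈ C
  symm := by
    constructor
    intro p q h
    refine ⟨h.1.symm, ?_⟩
    rw [Sym2.eq_swap]
    exact h.2
  loopless := by constructor; intro p h; exact h.1 rfl

/-- `C` is a cycle in the `m × n` grid: a nonempty connected 2-regular subgraph. -/
def IsCycle (m n : ℤ) (C : Set Edge) : Prop :=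
  C.Nonempty ∧ (∀ e ∈ C, gridEdge m n e) ∧
  (∀ p : V, degree C p = 0 ∨ degree C p = 2) ∧
  (∀ p q : V, (∃ e ∈ C, p ∈ e) → (∃ e ∈ C, q ∈ e) → (cycleGraph C).Reachable p q)

/-- Two edge sets have the same signature on the `m × n` grid. -/
def SameSignature (m n : ℤ) (C₁ C₂ : Set Edge) : Prop :=
  ∀ a b : ℤ, isCell m n a b → cellCount C₁ a b = cellCount C₂ a b

/-- Membership in the closed diamond `D(i)` of the `n × n` grid. -/
def inDiamond (n i : ℤ) (p : V) : Prop :=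
  i + 1 ≤ p.1 + p.2 ∧ p.1 + p.2 ≤ 2 * n - i + 1 ∧ -i ≤ p.1 - p.2 ∧ p.1 - p.2 ≤ i

/-- The diamond edge set `B(i)`: all edges of the `n × n` grid contained in `D(i)`. -/
def diamondSet (n i : ℤ) : Set Edge :=
  {e | gridEdge n n e ∧ ∀ p ∈ e, inDiamond n i p}

/-- The symmetric difference of two edge sets. -/
def sdiff (A B : Set Edge) : Set Edge := (A \ B) ∪ (B \ A)




lemma dvd_bounded {M d : ℤ} (hM : 0 < M) (h : M ∣ d) (h1 : -M ≤ d) (h2 : d < 2*M) :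
    d = -M ∨ d = 0 ∨ d = M := by
  obtain ⟨k, rfl⟩ := h
  have hk : k ≤ -2 ∨ k = -1 ∨ k = 0 ∨ k = 1 ∨ 2 ≤ k := by omega
  rcases hk with hk | rfl | rfl | rfl | hk
  · nlinarith
  · simp
  · simp
  · simp
  · nlinarith

/-- Fold `a` into `[0, m]` using reflections with period `2m`. -/
def fold (m a : ℤ) : ℤ := min (a % (2*m)) (2*m - a % (2*m))

variable {m a : ℤ}

lemma emod_facts (hm : 0 < m) (a : ℤ) :
    0 ≤ a % (2*m) ∧ a % (2*m) < 2*m ∧ (2*m) ∣ (a - a % (2*m)) := by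
  refine ⟨Int.emod_nonneg a (by omega), Int.emod_lt_of_pos a (by omega), ?_⟩
  have : a - a % (2*m) = 2*m * (a / (2*m)) := by rw [Int.emod_def]; ring
  exact ⟨_, this⟩

lemma fold_range (hm : 0 < m) (a : ℤ) : 0 ≤ fold m a ∧ fold m a ≤ m := by
  obtain ⟨h1, h2, -⟩ := emod_facts hm a
  unfold fold; omega

lemma fold_id (hm : 0 < m) (h0 : 0 ≤ a) (h1 : a ≤ m) : fold m a = a := by
  obtain ⟨e1, e2, e3⟩ := emod_facts hm a
  have := dvd_bounded (by omega : (0:ℤ) < 2*m) e3 (by omega) (by omega)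
  unfold fold; omega

lemma fold_period (hm : 0 < m) (a : ℤ) : fold m (a + 2*m) = fold m a := by
  unfold fold
  rw [show a + 2*m = a + (2*m)*1 by ring, Int.add_mul_emod_self_left]

lemma fold_neg (hm : 0 < m) (a : ℤ) : fold m (-a) = fold m a := by
  obtain ⟨e1, e2, e3⟩ := emod_facts hm a
  obtain ⟨f1, f2, f3⟩ := emod_facts hm (-a)
  have hd : (2*m) ∣ ((-a) % (2*m) + a % (2*m)) := by
    have := Int.dvd_add e3 f3
    have h : a - a % (2 * m) + (-a - -a % (2 * m)) = -((-a) % (2*m) + a % (2*m)) := by ring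
    rw [h] at this
    exact (dvd_neg.mp this)
  have := dvd_bounded (by omega : (0:ℤ) < 2*m) hd (by omega) (by omega)
  unfold fold; omega

lemma fold_sub_period (hm : 0 < m) (a : ℤ) : fold m (a - 2*m) = fold m a := by
  have := fold_period hm (a - 2*m)
  rw [show a - 2*m + 2*m = a by ring] at this
  exact this.symm

lemma fold_period_mul (hm : 0 < m) (a k : ℤ) : fold m (a + 2*m*k) = fold m a := by
  induction k using Int.induction_on with
  | zero => simp
  | succ i ih =>
      rw [show a + 2*m*(i+1) = (a + 2*m*i) + 2*m by ring, fold_period hm, ih]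
  | pred i ih =>
      rw [show a + 2*m*(-i-1) = (a + 2*m*(-i)) - 2*m by ring, fold_sub_period hm]
      rw [show a + 2*m*(-↑i) = a - 2*m*i by ring] at ih ⊢
      exact ih

lemma dvd_iff_emod (hm : 0 < m) (a : ℤ) : m ∣ a ↔ (a % (2*m) = 0 ∨ a % (2*m) = m) := by
  obtain ⟨e1, e2, e3⟩ := emod_facts hm a
  have h2 : m ∣ (a - a % (2*m)) := dvd_trans ⟨2, by ring⟩ e3
  constructor
  · intro h
    have h3 : m ∣ a % (2*m) := by
      have := Int.dvd_sub h h2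
      rw [show a - (a - a % (2*m)) = a % (2*m) by ring] at this
      exact this
    have := dvd_bounded hm h3 (by omega) (by omega)
    omega
  · intro h
    have : m ∣ (a - a % (2*m)) + a % (2*m) := by
      apply Int.dvd_add h2
      rcases h with h | h <;> simp [h]
    rw [show a - a % (2*m) + a % (2*m) = a by ring] at this
    exact this

lemma fold_vals_of_dvd (hm : 0 < m) (h : m ∣ a) : fold m a = 0 ∨ fold m a = m := by
  rw [dvd_iff_emod hm] at h
  obtain ⟨e1, e2, -⟩ := emod_facts hm a
  unfold fold; omega

lemma succ_pred_emod (hm : 0 < m) (a : ℤ) :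
    ((a+1) % (2*m) = a % (2*m) + 1 ∨ (a+1) % (2*m) = a % (2*m) + 1 - 2*m) ∧
    ((a-1) % (2*m) = a % (2*m) - 1 ∨ (a-1) % (2*m) = a % (2*m) - 1 + 2*m) := by
  obtain ⟨e1, e2, e3⟩ := emod_facts hm a
  obtain ⟨f1, f2, f3⟩ := emod_facts hm (a+1)
  obtain ⟨g1, g2, g3⟩ := emod_facts hm (a-1)
  constructor
  · have hd : (2*m) ∣ ((a+1) % (2*m) - a % (2*m) - 1) := by
      have := Int.dvd_sub e3 f3
      rw [show a - a % (2*m) - (a + 1 - (a+1) % (2*m)) = (a+1) % (2*m) - a % (2*m) - 1 by ring] at this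
      exact this
    have := dvd_bounded (by omega : (0:ℤ) < 2*m) hd (by omega) (by omega)
    omega
  · have hd : (2*m) ∣ ((a-1) % (2*m) - a % (2*m) + 1) := by
      have := Int.dvd_sub e3 g3
      rw [show a - a % (2*m) - (a - 1 - (a-1) % (2*m)) = (a-1) % (2*m) - a % (2*m) + 1 by ring] at this
      exact this
    have := dvd_bounded (by omega : (0:ℤ) < 2*m) hd (by omega) (by omega)
    omega

lemma fold_refl_eq (hm : 0 < m) (h : m ∣ a) : fold m (a+1) = fold m (a-1) := by
  have hh := (dvd_iff_emod hm a).mp h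
  obtain ⟨e1, e2, -⟩ := emod_facts hm a
  obtain ⟨f1, f2, -⟩ := emod_facts hm (a+1)
  obtain ⟨g1, g2, -⟩ := emod_facts hm (a-1)
  obtain ⟨hs, hp⟩ := succ_pred_emod hm a
  unfold fold; omega

lemma fold_step (hm : 0 < m) (h : ¬ m ∣ a) :
    (fold m (a+1) = fold m a + 1 ∧ fold m (a-1) = fold m a - 1) ∨
    (fold m (a+1) = fold m a - 1 ∧ fold m (a-1) = fold m a + 1) := by
  have hh := (dvd_iff_emod hm a).not.mp h
  push_neg at hh
  obtain ⟨e1, e2, -⟩ := emod_facts hm a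
  obtain ⟨f1, f2, -⟩ := emod_facts hm (a+1)
  obtain ⟨g1, g2, -⟩ := emod_facts hm (a-1)
  obtain ⟨hs, hp⟩ := succ_pred_emod hm a
  unfold fold; omega

end Slitherlink

namespace Slitherlink

lemma z4 (x y z w : ZMod 2) (h : x + y + z + w = 0) : x + y = z + w := by
  revert h; revert x y z w; decide

lemma z2 {x y : ZMod 2} (h : x + y = 0) : x = y := by
  revert h; revert x y; decide

/-- The key lemma: a box-supported solution of the mod-2 harmonic cell relation
vanishes when `gcd m n = 1`. -/
lemma key (m n : ℤ) (hm : 0 < m) (hn : 0 < n) (hd : Int.gcd m n = 1)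
    (s : ℤ → ℤ → ZMod 2)
    (hsupp : ∀ a b : ℤ, s a b ≠ 0 → 1 ≤ a ∧ a ≤ m - 1 ∧ 1 ≤ b ∧ b ≤ n - 1)
    (hrel : ∀ a b : ℤ, 1 ≤ a → a ≤ m - 1 → 1 ≤ b → b ≤ n - 1 →
      s (a-1) b + s (a+1) b + s a (b-1) + s a (b+1) = 0) :
    ∀ a b : ℤ, s a b = 0 := by
  classical
  -- the reflected extension
  set t : ℤ → ℤ → ZMod 2 := fun a b => s (fold m a) (fold n b) with ht
  -- vanishing on the reflection lines
  have tzero_a : ∀ a b : ℤ, m ∣ a → t a b = 0 := by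
    intro a b hdvd
    by_contra hne
    have h := hsupp _ _ hne
    rcases fold_vals_of_dvd hm hdvd with h0 | h0 <;> omega
  have tzero_b : ∀ a b : ℤ, n ∣ b → t a b = 0 := by
    intro a b hdvd
    by_contra hne
    have h := hsupp _ _ hne
    rcases fold_vals_of_dvd hn hdvd with h0 | h0 <;> omega
  -- the relation holds everywhere for the extension
  have trel : ∀ a b : ℤ, t (a-1) b + t (a+1) b + t a (b-1) + t a (b+1) = 0 := by
    intro a b
    by_cases hma : m ∣ a
    · have h1 : t (a-1) b = t (a+1) b := by
        rw [ht]; simp only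
        rw [fold_refl_eq hm hma]
      have h2 : t a (b-1) = 0 := by
        by_contra hne
        have h := hsupp _ _ hne
        rcases fold_vals_of_dvd hm hma with h0 | h0 <;> omega
      have h3 : t a (b+1) = 0 := by
        by_contra hne
        have h := hsupp _ _ hne
        rcases fold_vals_of_dvd hm hma with h0 | h0 <;> omega
      rw [h1, h2, h3, add_zero, add_zero]
      exact CharTwo.add_self_eq_zero _
    · by_cases hnb : n ∣ b
      · have h1 : t a (b-1) = t a (b+1) := by
          rw [ht]; simp only
          rw [fold_refl_eq hn hnb]
        have h2 : t (a-1) b = 0 := by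
          by_contra hne
          have h := hsupp _ _ hne
          rcases fold_vals_of_dvd hn hnb with h0 | h0 <;> omega
        have h3 : t (a+1) b = 0 := by
          by_contra hne
          have h := hsupp _ _ hne
          rcases fold_vals_of_dvd hn hnb with h0 | h0 <;> omega
        rw [h1, h2, h3]
        have : ∀ x : ZMod 2, 0 + 0 + x + x = 0 := by decide
        exact this _
      · -- interior: fold values in the open range
        obtain ⟨ra0, ra1⟩ := fold_range hm a
        obtain ⟨rb0, rb1⟩ := fold_range hn b
        have hfa : 1 ≤ fold m a ∧ fold m a ≤ m - 1 := by
          constructor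
          · rcases eq_or_lt_of_le ra0 with h | h
            · exact absurd ((dvd_iff_emod hm a).mpr (by unfold fold at h; obtain ⟨e1,e2,-⟩ := emod_facts hm a; omega)) hma
            · omega
          · rcases eq_or_lt_of_le ra1 with h | h
            · exact absurd ((dvd_iff_emod hm a).mpr (by unfold fold at h; obtain ⟨e1,e2,-⟩ := emod_facts hm a; omega)) hma
            · omega
        have hfb : 1 ≤ fold n b ∧ fold n b ≤ n - 1 := by
          constructor
          · rcases eq_or_lt_of_le rb0 with h | h
            · exact absurd ((dvd_iff_emod hn b).mpr (by unfold fold at h; obtain ⟨e1,e2,-⟩ := emod_facts hn b; omega)) hnb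
            · omega
          · rcases eq_or_lt_of_le rb1 with h | h
            · exact absurd ((dvd_iff_emod hn b).mpr (by unfold fold at h; obtain ⟨e1,e2,-⟩ := emod_facts hn b; omega)) hnb
            · omega
        have hr := hrel (fold m a) (fold n b) hfa.1 hfa.2 hfb.1 hfb.2
        have hfa' := fold_step hm hma
        have hfb' := fold_step hn hnb
        rw [ht]; simp only
        rcases hfa' with ⟨u1, u2⟩ | ⟨u1, u2⟩ <;> rcases hfb' with ⟨v1, v2⟩ | ⟨v1, v2⟩ <;>
          rw [u1, u2, v1, v2] <;>
          [skip; skip; skip; skip] <;>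
          · revert hr
            generalize s (fold m a - 1) (fold n b) = A
            generalize s (fold m a + 1) (fold n b) = B
            generalize s (fold m a) (fold n b - 1) = C
            generalize s (fold m a) (fold n b + 1) = D
            revert A B C D; decide
  -- symmetries of t
  have tper_a : ∀ a b k : ℤ, t (a + 2*m*k) b = t a b := by
    intro a b k; rw [ht]; simp only [fold_period_mul hm]
  have tper_b : ∀ a b k : ℤ, t a (b + 2*n*k) = t a b := by
    intro a b k; rw [ht]; simp only [fold_period_mul hn]
  have tneg_a : ∀ a b : ℤ, t (-a) b = t a b := by
    intro a b; rw [ht]; simp only [fold_neg hm]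
  -- antidiagonal invariance
  have einv : ∀ a b : ℤ, t (a+1) b + t a (b+1) = t (a+2) (b+1) + t (a+1) (b+2) := by
    intro a b
    have h := trel (a+1) (b+1)
    rw [show a+1-1 = a by ring, show b+1-1 = b by ring, show a+1+1 = a+2 by ring,
      show b+1+1 = b+2 by ring] at h
    revert h
    generalize t a (b+1) = A
    generalize t (a+2) (b+1) = B
    generalize t (a+1) b = C
    generalize t (a+1) (b+2) = D
    revert A B C D; decide
  set g : ℤ → ZMod 2 := fun c => t c 1 with hg
  have diag : ∀ b a : ℤ, t (a+1) b + t a (b+1) = g (a - b) := by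
    intro b
    induction b using Int.induction_on with
    | zero =>
        intro a
        rw [tzero_b (a+1) 0 (dvd_zero n), zero_add, sub_zero, show (0:ℤ)+1 = 1 by ring]
    | succ i ih =>
        intro a
        have h := einv (a-1) i
        rw [show a-1+1 = a by ring, show a-1+2 = a+1 by ring] at h
        have h2 := ih (a-1)
        rw [show a-1+1 = a by ring] at h2
        rw [show ((i:ℤ)+1)+1 = (i:ℤ)+2 by ring, ← h, h2,
          show a-1-(i:ℤ) = a - ((i:ℤ)+1) by ring]
    | pred i ih =>
        intro a
        have h := einv a (-(i:ℤ)-1)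
        rw [show -(i:ℤ)-1+1 = -(i:ℤ) by ring, show -(i:ℤ)-1+2 = -(i:ℤ)+1 by ring] at h
        have h2 := ih (a+1)
        rw [show a+1+1 = a+2 by ring] at h2
        rw [show -(i:ℤ)-1+1 = -(i:ℤ) by ring, h, h2,
          show a+1 - (-(i:ℤ)) = a - (-(i:ℤ)-1) by ring]
  have g_even : ∀ c : ℤ, g (-c) = g c := fun c => tneg_a c 1
  have g1 : ∀ b : ℤ, t 1 b = g b := by
    intro b
    have h := diag b 0
    rw [show (0:ℤ)+1 = 1 by ring, tzero_a 0 (b+1) (dvd_zero m), add_zero,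
      zero_sub, g_even] at h
    exact h
  have gper_m : ∀ c k : ℤ, g (c + 2*m*k) = g c := fun c k => tper_a c 1 k
  have gper_n : ∀ c k : ℤ, g (c + 2*n*k) = g c := by
    intro c k
    rw [← g1, ← g1]
    exact tper_b 1 c k
  have gper2 : ∀ c k : ℤ, g (c + 2*k) = g c := by
    have hco : IsCoprime m n := Int.isCoprime_iff_gcd_eq_one.mpr hd
    obtain ⟨u, v, huv⟩ := hco
    intro c k
    have h : c + 2*k = (c + 2*n*(v*k)) + 2*m*(u*k) := by
      have : (2*k) * (u*m + v*n) = 2*k := by rw [huv, mul_one]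
      nlinarith [this]
    rw [h, gper_m, gper_n]
  have g0 : g 0 = 0 := tzero_a 0 1 (dvd_zero m)
  have godd : g 1 = 0 := by
    by_cases h2 : (2:ℤ) ∣ m
    · -- then n is odd
      have h2n : ¬ (2:ℤ) ∣ n := by
        intro h2n
        have hdd : (2:ℤ) ∣ (Int.gcd m n : ℤ) := Int.dvd_coe_gcd h2 h2n
        rw [hd] at hdd
        norm_num at hdd
      obtain ⟨k, hk⟩ : ∃ k : ℤ, n = 2*k+1 := ⟨n / 2, by omega⟩
      have : g n = 0 := by rw [← g1]; exact tzero_b 1 n (dvd_refl n)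
      rw [hk, show 2*k+1 = 1 + 2*k by ring, gper2] at this
      exact this
    · obtain ⟨k, hk⟩ : ∃ k : ℤ, m = 2*k+1 := ⟨m / 2, by omega⟩
      have : g m = 0 := tzero_a m 1 (dvd_refl m)
      rw [hk, show 2*k+1 = 1 + 2*k by ring, gper2] at this
      exact this
  have gall : ∀ c : ℤ, g c = 0 := by
    intro c
    rcases Int.even_or_odd c with ⟨k, hk⟩ | ⟨k, hk⟩
    · rw [hk, show k + k = 0 + 2*k by ring, gper2]; exact g0
    · rw [hk, show 2*k+1 = 1 + 2*k by ring, gper2]; exact godd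
  have tconst : ∀ a b : ℤ, t (a+1) b = t a (b+1) := by
    intro a b
    have h := diag b a
    rw [gall] at h
    exact z2 h
  have tline : ∀ b a : ℤ, t a b = t (a + b) 0 := by
    intro b
    induction b using Int.induction_on with
    | zero => intro a; rw [add_zero]
    | succ i ih =>
        intro a
        rw [← tconst a (i:ℤ), ih (a+1), show a+1+(i:ℤ) = a + ((i:ℤ)+1) by ring]
    | pred i ih =>
        intro a
        have h := tconst (a-1) (-(i:ℤ)-1)
        rw [show a-1+1 = a by ring, show -(i:ℤ)-1+1 = -(i:ℤ) by ring] at h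
        rw [h, ih (a-1), show a-1+(-(i:ℤ)) = a + (-(i:ℤ)-1) by ring]
  have tall : ∀ a b : ℤ, t a b = 0 := by
    intro a b
    rw [tline b a]
    exact tzero_b _ 0 (dvd_zero n)
  -- conclude for s
  intro a b
  by_contra hne
  obtain ⟨ha1, ha2, hb1, hb2⟩ := hsupp a b hne
  have : t a b = s a b := by
    rw [ht]; simp only
    rw [fold_id hm (by omega) (by omega), fold_id hn (by omega) (by omega)]
  rw [← this, tall] at hne
  exact hne rfl



/-- The horizontal unit edge with left endpoint `(x, y)`. -/
def hedge (x y : ℤ) : Edge := s((x, y), (x + 1, y))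

/-- The vertical unit edge with bottom endpoint `(x, y)`. -/
def vedge (x y : ℤ) : Edge := s((x, y), (x, y + 1))

lemma gridEdge_hedge {m n x y : ℤ} (h : gridEdge m n (hedge x y)) :
    1 ≤ x ∧ x + 1 ≤ m ∧ 1 ≤ y ∧ y ≤ n := by
  obtain ⟨p, q, he, hp, hq, hstep⟩ := h
  rw [hedge, Sym2.eq_iff] at he
  rcases he with ⟨h1, h2⟩ | ⟨h1, h2⟩ <;> subst h1 <;> subst h2 <;>
    unfold gridVertex at hp hq <;> simp only [Prod.fst, Prod.snd] at * <;> omega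

lemma gridEdge_vedge {m n x y : ℤ} (h : gridEdge m n (vedge x y)) :
    1 ≤ x ∧ x ≤ m ∧ 1 ≤ y ∧ y + 1 ≤ n := by
  obtain ⟨p, q, he, hp, hq, hstep⟩ := h
  rw [vedge, Sym2.eq_iff] at he
  rcases he with ⟨h1, h2⟩ | ⟨h1, h2⟩ <;> subst h1 <;> subst h2 <;>
    unfold gridVertex at hp hq <;> simp only [Prod.fst, Prod.snd] at * <;> omega

lemma gridEdge_cases {m n : ℤ} {e : Edge} (h : gridEdge m n e) :
    ∃ x y : ℤ, e = hedge x y ∨ e = vedge x y := by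
  obtain ⟨⟨px, py⟩, ⟨qx, qy⟩, he, hp, hq, hstep⟩ := h
  simp only [Prod.fst, Prod.snd] at hstep
  rcases hstep with ⟨h1, h2⟩ | ⟨h1, h2⟩ <;> subst h1 <;> subst h2
  · exact ⟨_, _, Or.inl (by rw [he, hedge])⟩
  · exact ⟨_, _, Or.inr (by rw [he, vedge])⟩

lemma hedge_inj {x y x' y' : ℤ} : hedge x y = hedge x' y' ↔ x = x' ∧ y = y' := by
  constructor
  · intro h
    rw [hedge, hedge, Sym2.eq_iff] at h
    rcases h with ⟨h1, h2⟩ | ⟨h1, h2⟩ <;>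
      simp only [Prod.mk.injEq] at h1 h2 <;> omega
  · rintro ⟨rfl, rfl⟩; rfl

lemma vedge_inj {x y x' y' : ℤ} : vedge x y = vedge x' y' ↔ x = x' ∧ y = y' := by
  constructor
  · intro h
    rw [vedge, vedge, Sym2.eq_iff] at h
    rcases h with ⟨h1, h2⟩ | ⟨h1, h2⟩ <;>
      simp only [Prod.mk.injEq] at h1 h2 <;> omega
  · rintro ⟨rfl, rfl⟩; rfl

lemma hedge_ne_vedge {x y x' y' : ℤ} : hedge x y ≠ vedge x' y' := by
  intro h
  rw [hedge, vedge, Sym2.eq_iff] at h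
  rcases h with ⟨h1, h2⟩ | ⟨h1, h2⟩ <;>
    simp only [Prod.mk.injEq] at h1 h2 <;> omega

open Classical in
/-- The mod-2 indicator function of an edge set. -/
noncomputable def chi (E : Set Edge) (e : Edge) : ZMod 2 := if e ∈ E then 1 else 0

lemma chi_add (C₁ C₂ : Set Edge) (e : Edge) :
    chi ((C₁ \ C₂) ∪ (C₂ \ C₁)) e = chi C₁ e + chi C₂ e := by
  unfold chi
  by_cases h1 : e ∈ C₁ <;> by_cases h2 : e ∈ C₂ <;>
    simp [h1, h2, Set.mem_union, Set.mem_diff] <;> decide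

lemma ncard_inter_finset (E : Set Edge) (F : Finset Edge) :
    ((E ∩ ↑F).ncard : ZMod 2) = ∑ e ∈ F, chi E e := by
  classical
  have h : E ∩ ↑F = ↑(F.filter (· ∈ E)) := by
    ext e; simp [Finset.mem_filter, and_comm]
  rw [h, Set.ncard_coe_finset, Finset.card_filter]
  push_cast
  apply Finset.sum_congr rfl
  intro e _
  unfold chi
  split_ifs <;> simp

/-- The four candidate edges at a vertex. -/
noncomputable def star (p : V) : Finset Edge :=
  {hedge (p.1 - 1) p.2, hedge p.1 p.2, vedge p.1 (p.2 - 1), vedge p.1 p.2}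

lemma mem_star_mem {p : V} {e : Edge} (he : e ∈ star p) : p ∈ e := by
  have h1 : p ∈ hedge (p.1 - 1) p.2 := by
    rw [hedge, Sym2.mem_iff]; right
    rw [show p.1 - 1 + 1 = p.1 by ring]
  have h2 : p ∈ hedge p.1 p.2 := by
    rw [hedge, Sym2.mem_iff]; left; rfl
  have h3 : p ∈ vedge p.1 (p.2 - 1) := by
    rw [vedge, Sym2.mem_iff]; right
    rw [show p.2 - 1 + 1 = p.2 by ring]
  have h4 : p ∈ vedge p.1 p.2 := by
    rw [vedge, Sym2.mem_iff]; left; rfl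
  simp only [star, Finset.mem_insert, Finset.mem_singleton] at he
  rcases he with rfl | rfl | rfl | rfl <;> assumption

lemma grid_mem_star {m n : ℤ} {p : V} {e : Edge} (hg : gridEdge m n e) (hpe : p ∈ e) :
    e ∈ star p := by
  obtain ⟨x, y, hc | hc⟩ := gridEdge_cases hg <;> subst hc <;>
    simp only [star, Finset.mem_insert, Finset.mem_singleton]
  · rw [hedge, Sym2.mem_iff] at hpe
    rcases hpe with rfl | rfl
    · right; left; rfl
    · left; rw [hedge_inj]; constructor <;> simp
  · rw [vedge, Sym2.mem_iff] at hpe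
    rcases hpe with rfl | rfl
    · right; right; right; rfl
    · right; right; left; rw [vedge_inj]; constructor <;> simp

lemma degree_decomp {m n : ℤ} {E : Set Edge} (hE : ∀ e ∈ E, gridEdge m n e) (p : V) :
    ((degree E p : ZMod 2)) = chi E (hedge (p.1 - 1) p.2) + chi E (hedge p.1 p.2) +
      chi E (vedge p.1 (p.2 - 1)) + chi E (vedge p.1 p.2) := by
  classical
  have hset : {e ∈ E | p ∈ e} = E ∩ ↑(star p) := by
    ext e
    simp only [Set.mem_setOf_eq, Set.mem_inter_iff, Finset.coe_insert, Set.mem_insert_iff,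
      Finset.coe_singleton, Set.mem_singleton_iff, star]
    constructor
    · rintro ⟨h1, h2⟩
      refine ⟨h1, ?_⟩
      have := grid_mem_star (hE e h1) h2
      simpa [star] using this
    · rintro ⟨h1, h2⟩
      refine ⟨h1, mem_star_mem ?_⟩
      simp [star, h2]
  rw [degree, hset, ncard_inter_finset]
  rw [star]
  rw [Finset.sum_insert (by
    simp only [Finset.mem_insert, Finset.mem_singleton]
    push_neg
    refine ⟨?_, hedge_ne_vedge, hedge_ne_vedge⟩
    simp only [Ne, hedge_inj]; omega)]
  rw [Finset.sum_insert (by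
    simp only [Finset.mem_insert, Finset.mem_singleton]
    push_neg
    exact ⟨hedge_ne_vedge, hedge_ne_vedge⟩)]
  rw [Finset.sum_insert (by
    simp only [Finset.mem_singleton, Ne, vedge_inj]
    omega)]
  rw [Finset.sum_singleton]
  ring

lemma cell_decomp (E : Set Edge) (a b : ℤ) :
    ((cellCount E a b : ZMod 2)) = chi E (hedge a b) + chi E (vedge a b) +
      chi E (vedge (a + 1) b) + chi E (hedge a (b + 1)) := by
  classical
  have hset : cellEdges a b =
      ↑({hedge a b, vedge a b, vedge (a + 1) b, hedge a (b + 1)} : Finset Edge) := by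
    simp only [cellEdges, hedge, vedge, Finset.coe_insert, Finset.coe_singleton]
  rw [cellCount, hset, ncard_inter_finset]
  rw [Finset.sum_insert (by
    simp only [Finset.mem_insert, Finset.mem_singleton]
    push_neg
    refine ⟨hedge_ne_vedge, hedge_ne_vedge, ?_⟩
    simp only [Ne, hedge_inj]; omega)]
  rw [Finset.sum_insert (by
    simp only [Finset.mem_insert, Finset.mem_singleton]
    push_neg
    refine ⟨?_, fun h => hedge_ne_vedge h.symm⟩
    simp only [Ne, vedge_inj]; omega)]
  rw [Finset.sum_insert (by
    rw [Finset.mem_singleton]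
    exact fun h => hedge_ne_vedge h.symm)]
  rw [Finset.sum_singleton]
  ring


section Reduction

variable {m n : ℤ} {E : Set Edge}

open Classical in
/-- Partial row sums of vertical-edge indicators. -/
noncomputable def S (E : Set Edge) (a b : ℤ) : ZMod 2 :=
  ∑ x ∈ Finset.Icc 1 a, chi E (vedge x b)

lemma chi_zero (hE : ∀ e ∈ E, gridEdge m n e) {e : Edge} (h : ¬ gridEdge m n e) :
    chi E e = 0 := by
  unfold chi
  split_ifs with hmem
  · exact absurd (hE e hmem) h
  · rfl

lemma S_nonpos {a b : ℤ} (h : a ≤ 0) : S E a b = 0 := by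
  unfold S
  rw [Finset.Icc_eq_empty (by omega), Finset.sum_empty]

lemma S_rec {a b : ℤ} (h : 1 ≤ a) : S E a b = S E (a-1) b + chi E (vedge a b) := by
  unfold S
  have hins : Finset.Icc (1:ℤ) a = insert a (Finset.Icc 1 (a-1)) := by
    ext z
    simp only [Finset.mem_Icc, Finset.mem_insert]
    omega
  rw [hins, Finset.sum_insert (by simp only [Finset.mem_Icc]; omega), add_comm]

lemma S_row_out (hE : ∀ e ∈ E, gridEdge m n e) {a b : ℤ} (h : b ≤ 0 ∨ n ≤ b) :
    S E a b = 0 := by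
  unfold S
  apply Finset.sum_eq_zero
  intro x hx
  apply chi_zero hE
  intro hg
  have := gridEdge_vedge hg
  omega

lemma hrelation (hE : ∀ e ∈ E, gridEdge m n e)
    (hdeg : ∀ p : V, ((degree E p : ZMod 2)) = 0) :
    ∀ x y : ℤ, chi E (hedge x y) = S E x (y-1) + S E x y := by
  have hstep : ∀ x y : ℤ, chi E (hedge (x-1) y) + chi E (hedge x y) +
      chi E (vedge x (y-1)) + chi E (vedge x y) = 0 := by
    intro x y
    have := hdeg (x, y)
    rw [degree_decomp hE (x, y)] at this
    exact this
  intro x y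
  rcases le_or_gt x 0 with hx | hx
  · rw [S_nonpos hx, S_nonpos hx, chi_zero hE (fun hg => by have := gridEdge_hedge hg; omega)]
    decide
  · have hx' : 1 ≤ x := hx
    refine Int.le_induction (motive := fun z _ => chi E (hedge z y) = S E z (y-1) + S E z y) ?_ ?_ x hx'
    · have h := hstep 1 y
      rw [show (1:ℤ)-1 = 0 by ring] at h
      rw [chi_zero hE (e := hedge 0 y) (fun hg => by have := gridEdge_hedge hg; omega)] at h
      show chi E (hedge 1 y) = S E 1 (y-1) + S E 1 y
      rw [S_rec (a := 1) (b := y-1) le_rfl, S_rec (a := 1) (b := y) le_rfl,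
        show (1:ℤ)-1 = 0 by ring, S_nonpos le_rfl, S_nonpos le_rfl, zero_add, zero_add]
      revert h
      generalize chi E (hedge 1 y) = A
      generalize chi E (vedge 1 (y-1)) = B
      generalize chi E (vedge 1 y) = C
      revert A B C; decide
    · intro x hx ih
      have h := hstep (x+1) y
      rw [show x+1-1 = x by ring] at h
      show chi E (hedge (x+1) y) = S E (x+1) (y-1) + S E (x+1) y
      rw [S_rec (a := x+1) (b := y-1) (by omega), S_rec (a := x+1) (b := y) (by omega),
        show x+1-1 = x by ring]
      revert h ih
      generalize chi E (hedge x y) = A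
      generalize chi E (hedge (x+1) y) = B
      generalize chi E (vedge (x+1) (y-1)) = C
      generalize chi E (vedge (x+1) y) = D
      generalize S E x (y-1) = P
      generalize S E x y = Q
      revert A B C D P Q; decide

lemma S_col_m (hm : 0 < m) (hE : ∀ e ∈ E, gridEdge m n e)
    (hdeg : ∀ p : V, ((degree E p : ZMod 2)) = 0) :
    ∀ y : ℤ, S E m y = 0 := by
  have hconst : ∀ y : ℤ, S E m y = S E m (y-1) := by
    intro y
    have h := hrelation hE hdeg m y
    rw [chi_zero hE (fun hg => by have := gridEdge_hedge hg; omega)] at h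
    have := z2 h.symm
    rw [this]
  intro y
  rcases le_or_gt y 0 with hy | hy
  · exact S_row_out hE (Or.inl hy)
  · have hy' : 1 ≤ y := hy
    refine Int.le_induction (motive := fun z _ => S E m z = 0) ?_ ?_ y hy'
    · show S E m 1 = 0
      rw [hconst 1, show (1:ℤ)-1 = 0 by ring]
      exact S_row_out hE (Or.inl le_rfl)
    · intro y hy ih
      show S E m (y+1) = 0
      rw [hconst (y+1), show y+1-1 = y by ring]
      exact ih

lemma S_ge_m (hm : 0 < m) (hE : ∀ e ∈ E, gridEdge m n e)
    (hdeg : ∀ p : V, ((degree E p : ZMod 2)) = 0) :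
    ∀ a y : ℤ, m ≤ a → S E a y = 0 := by
  intro a y ha
  refine Int.le_induction (motive := fun z _ => S E z y = 0) ?_ ?_ a ha
  · exact S_col_m hm hE hdeg y
  · intro a ha ih
    show S E (a+1) y = 0
    rw [S_rec (a := a+1) (b := y) (by omega), show a+1-1 = a by ring, ih,
      chi_zero hE (fun hg => by have := gridEdge_vedge hg; omega)]
    decide

/-- A set of grid edges with even degrees and even cell counts (mod 2) is empty. -/
lemma even_zero (hm : 0 < m) (hn : 0 < n) (hd : Int.gcd m n = 1)
    (hE : ∀ e ∈ E, gridEdge m n e)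
    (hdeg : ∀ p : V, ((degree E p : ZMod 2)) = 0)
    (hcell : ∀ a b : ℤ, isCell m n a b → ((cellCount E a b : ZMod 2)) = 0) :
    E = ∅ := by
  have hkey := key m n hm hn hd (S E)
    (by
      intro a b hne
      by_contra hcon
      push_neg at hcon
      rcases le_or_gt a 0 with h | h
      · exact hne (S_nonpos h)
      rcases le_or_gt m a with h2 | h2
      · exact hne (S_ge_m hm hE hdeg a b h2)
      rcases le_or_gt b 0 with h3 | h3
      · exact hne (S_row_out hE (Or.inl h3))
      rcases le_or_gt n b with h4 | h4
      · exact hne (S_row_out hE (Or.inr h4))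
      omega)
    (by
      intro a b ha1 ha2 hb1 hb2
      have hc := hcell a b ⟨ha1, by omega, hb1, by omega⟩
      rw [cell_decomp] at hc
      have e1 := hrelation hE hdeg a b
      have e2 := hrelation hE hdeg a (b+1)
      rw [show b+1-1 = b by ring] at e2
      have e3 : chi E (vedge a b) = S E (a-1) b + S E a b := by
        have := S_rec (E := E) (b := b) ha1
        revert this
        generalize chi E (vedge a b) = A
        generalize S E (a-1) b = P
        generalize S E a b = Q
        revert A P Q; decide
      have e4 : chi E (vedge (a+1) b) = S E a b + S E (a+1) b := by
        have h := S_rec (E := E) (b := b) (a := a+1) (by omega)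
        rw [show a+1-1 = a by ring] at h
        revert h
        generalize chi E (vedge (a+1) b) = A
        generalize S E a b = P
        generalize S E (a+1) b = Q
        revert A P Q; decide
      rw [e1, e2, e3, e4] at hc
      revert hc
      generalize S E (a-1) b = P1
      generalize S E (a+1) b = P2
      generalize S E a (b-1) = P3
      generalize S E a (b+1) = P4
      generalize S E a b = P5
      revert P1 P2 P3 P4 P5; decide)
  -- now all S vanish; conclude every edge indicator vanishes
  have hchiv : ∀ x y : ℤ, chi E (vedge x y) = 0 := by
    intro x y
    rcases le_or_gt x 0 with h | h
    · exact chi_zero hE (fun hg => by have := gridEdge_vedge hg; omega)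
    · have := S_rec (E := E) (b := y) (a := x) h
      rw [hkey, hkey, zero_add] at this
      exact this.symm
  have hchih : ∀ x y : ℤ, chi E (hedge x y) = 0 := by
    intro x y
    rw [hrelation hE hdeg, hkey, hkey, zero_add]
  ext e
  simp only [Set.mem_empty_iff_false, iff_false]
  intro he
  obtain ⟨x, y, hc | hc⟩ := gridEdge_cases (hE e he) <;> subst hc
  · have := hchih x y
    unfold chi at this
    rw [if_pos he] at this
    exact one_ne_zero this
  · have := hchiv x y
    unfold chi at this
    rw [if_pos he] at this
    exact one_ne_zero this

end Reduction

theorem stmt14 (m n : ℤ) (hm : 0 < m) (hn : 0 < n) (hd : Int.gcd m n = 1)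
    (C₁ C₂ : Set Edge) (h₁ : IsCycle m n C₁) (h₂ : IsCycle m n C₂)
    (hs : SameSignature m n C₁ C₂) : C₁ = C₂ := by
  classical
  set E : Set Edge := (C₁ \ C₂) ∪ (C₂ \ C₁) with hEdef
  have hE : ∀ e ∈ E, gridEdge m n e := by
    intro e he
    rcases he with ⟨h, -⟩ | ⟨h, -⟩
    · exact h₁.2.1 e h
    · exact h₂.2.1 e h
  have hchiadd : ∀ e : Edge, chi E e = chi C₁ e + chi C₂ e := fun e => chi_add C₁ C₂ e
  have hdeg : ∀ p : V, ((degree E p : ZMod 2)) = 0 := by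
    intro p
    rw [degree_decomp hE p, hchiadd, hchiadd, hchiadd, hchiadd]
    have d1 := degree_decomp (h₁.2.1) p
    have d2 := degree_decomp (h₂.2.1) p
    have z1 : ((degree C₁ p : ZMod 2)) = 0 := by
      rcases h₁.2.2.1 p with h | h <;> rw [h] <;> decide
    have z2 : ((degree C₂ p : ZMod 2)) = 0 := by
      rcases h₂.2.2.1 p with h | h <;> rw [h] <;> decide
    rw [d1] at z1
    rw [d2] at z2
    revert z1 z2
    generalize chi C₁ (hedge (p.1 - 1) p.2) = A1
    generalize chi C₁ (hedge p.1 p.2) = A2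
    generalize chi C₁ (vedge p.1 (p.2 - 1)) = A3
    generalize chi C₁ (vedge p.1 p.2) = A4
    generalize chi C₂ (hedge (p.1 - 1) p.2) = B1
    generalize chi C₂ (hedge p.1 p.2) = B2
    generalize chi C₂ (vedge p.1 (p.2 - 1)) = B3
    generalize chi C₂ (vedge p.1 p.2) = B4
    revert A1 A2 A3 A4 B1 B2 B3 B4; decide
  have hcell : ∀ a b : ℤ, isCell m n a b → ((cellCount E a b : ZMod 2)) = 0 := by
    intro a b hc
    rw [cell_decomp, hchiadd, hchiadd, hchiadd, hchiadd]
    have d1 := cell_decomp C₁ a b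
    have d2 := cell_decomp C₂ a b
    have hz : ((cellCount C₁ a b : ZMod 2)) + ((cellCount C₂ a b : ZMod 2)) = 0 := by
      rw [hs a b hc]
      revert d2
      generalize ((cellCount C₂ a b : ZMod 2)) = A
      intro _
      exact CharTwo.add_self_eq_zero A
    rw [d1, d2] at hz
    revert hz
    generalize chi C₁ (hedge a b) = A1
    generalize chi C₁ (vedge a b) = A2
    generalize chi C₁ (vedge (a+1) b) = A3
    generalize chi C₁ (hedge a (b+1)) = A4
    generalize chi C₂ (hedge a b) = B1
    generalize chi C₂ (vedge a b) = B2
    generalize chi C₂ (vedge (a+1) b) = B3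
    generalize chi C₂ (hedge a (b+1)) = B4
    revert A1 A2 A3 A4 B1 B2 B3 B4; decide
  have hempty := even_zero hm hn hd hE hdeg hcell
  ext e
  constructor <;> intro he <;> by_contra hcon
  · have : e ∈ E := Or.inl ⟨he, hcon⟩
    rw [hempty] at this
    exact this
  · have : e ∈ E := Or.inr ⟨he, hcon⟩
    rw [hempty] at this
    exact this


end Slitherlink
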